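/- arXiv:1907.08037 — 3 statements merged into one kernel-verified Lean document; each statement's English description precedes it below -/
import Mathlib

section
/- For a single-qubit density matrix ρ = (I + r·σ)/2 with Bloch vector r depending smoothly on parameters x_a, x_b, the quantum Fisher information matrix entry equals F_ab = (∂_a r)·(∂_b r) + (r·∂_a r)(r·∂_b r)/(1 − |r|²), provided |r| < 1. -/
open Matrix

/-- The vector of Pauli matrices (σ_x, σ_y, σ_z). -/
noncomputable def pauli : Fin 3 → Matrix (Fin 2) (Fin 2) ℂ :=
  ![!![0, 1; 1, 0], !![0, -Complex.I; Complex.I, 0], !![1, 0; 0, -1]]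

/-!
The SLD equation `ρ L + L ρ = d·σ` for `ρ = (1 + r·σ)/2` pins down the Pauli moments
`t₀ = Tr L / 2`, `tⱼ = Tr (σⱼ L) / 2`: tracing it against `1` and `σⱼ`, with `{σⱼ, ρ} = σⱼ + rⱼ`,
gives `t₀ + r·t = 0` and `tⱼ + rⱼ t₀ = dⱼ`, so `t₀ = -(r·d)/(1 - |r|²)` once `|r| ≠ 1`.
By cyclicity, `Tr (ρ {L_a, L_b}) = Tr ({ρ, L_a} L_b) = Tr ((∂ₐr·σ) L_b) = 2 ∑ⱼ ∂ₐrⱼ tⱼ`, so only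
these moments of `L_b` enter.
-/

theorem Matrix.trace_mul_anticomm {n R : Type*} [Fintype n] [CommRing R] (X Y L : Matrix n n R) :
    (X * (Y * L + L * Y)).trace = ((X * Y + Y * X) * L).trace := by
  simp only [Matrix.mul_add, Matrix.add_mul, Matrix.trace_add, ← Matrix.mul_assoc]
  rw [trace_mul_cycle X L Y]

noncomputable def dotPauli (c : Fin 3 → ℂ) : Matrix (Fin 2) (Fin 2) ℂ :=
  ∑ i, c i • pauli i

noncomputable def blochState (r : Fin 3 → ℂ) : Matrix (Fin 2) (Fin 2) ℂ :=
  (1 / 2 : ℂ) • (1 + dotPauli r)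

theorem trace_pauli (i : Fin 3) : (pauli i).trace = 0 := by
  fin_cases i <;> simp [pauli, trace_fin_two]

theorem pauli_mul_pauli_add (i j : Fin 3) :
    pauli i * pauli j + pauli j * pauli i = (if i = j then 2 else 0 : ℂ) • 1 := by
  fin_cases i <;> fin_cases j <;> ext a b <;> fin_cases a <;> fin_cases b <;>
    norm_num [pauli, Matrix.one_apply]

theorem trace_pauli_mul_pauli (i j : Fin 3) :
    (pauli i * pauli j).trace = if i = j then 2 else 0 := by
  fin_cases i <;> fin_cases j <;> norm_num [pauli, trace_fin_two]

theorem trace_dotPauli (c : Fin 3 → ℂ) : (dotPauli c).trace = 0 := by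
  simp [dotPauli, trace_sum, trace_smul, trace_pauli]

theorem trace_dotPauli_mul (c : Fin 3 → ℂ) (L : Matrix (Fin 2) (Fin 2) ℂ) :
    (dotPauli c * L).trace = ∑ i, c i * (pauli i * L).trace := by
  simp [dotPauli, Finset.sum_mul, trace_sum, trace_smul]

theorem trace_pauli_mul_dotPauli (c : Fin 3 → ℂ) (j : Fin 3) :
    (pauli j * dotPauli c).trace = 2 * c j := by
  simp [dotPauli, Finset.mul_sum, trace_sum, trace_smul, trace_pauli_mul_pauli, mul_comm]

theorem pauli_mul_dotPauli_add (c : Fin 3 → ℂ) (j : Fin 3) :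
    pauli j * dotPauli c + dotPauli c * pauli j = (2 * c j) • 1 := by
  simp only [dotPauli, Finset.mul_sum, Finset.sum_mul, Matrix.mul_smul, Matrix.smul_mul,
    ← Finset.sum_add_distrib, ← smul_add, pauli_mul_pauli_add]
  simp [smul_smul, mul_comm]

theorem pauli_mul_blochState_add (r : Fin 3 → ℂ) (j : Fin 3) :
    pauli j * blochState r + blochState r * pauli j = pauli j + r j • 1 := by
  rw [blochState, Matrix.mul_smul, Matrix.smul_mul, ← smul_add, Matrix.mul_add, Matrix.add_mul,
    add_add_add_comm, pauli_mul_dotPauli_add, Matrix.mul_one, Matrix.one_mul, smul_add, smul_smul,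
    ← two_smul ℂ (pauli j), smul_smul]
  norm_num [← mul_assoc]

theorem half_trace_pauli_mul_sld {r d : Fin 3 → ℂ} (hr : 1 - r ⬝ᵥ r ≠ 0)
    {L : Matrix (Fin 2) (Fin 2) ℂ} (hL : blochState r * L + L * blochState r = dotPauli d)
    (j : Fin 3) :
    (pauli j * L).trace / 2 = d j + r j * (r ⬝ᵥ d) / (1 - r ⬝ᵥ r) := by
  set t : Fin 3 → ℂ := fun i => (pauli i * L).trace / 2 with ht_def
  set t₀ : ℂ := L.trace / 2 with ht₀_def
  have ht : ∀ i, t i = d i - r i * t₀ := by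
    intro i
    have h := congrArg (fun M => (pauli i * M).trace) hL
    simp only [trace_mul_anticomm, pauli_mul_blochState_add, trace_pauli_mul_dotPauli,
      Matrix.add_mul, trace_add, Matrix.smul_mul, Matrix.one_mul, trace_smul, smul_eq_mul] at h
    linear_combination h / 2
  have ht₀ : t₀ + r ⬝ᵥ t = 0 := by
    have h := congrArg trace hL
    rw [← Matrix.one_mul (_ + _), trace_mul_anticomm, Matrix.mul_one, Matrix.one_mul,
      trace_dotPauli, ← two_smul ℂ, blochState, smul_smul, mul_one_div_cancel two_ne_zero,
      one_smul, Matrix.add_mul, trace_add, Matrix.one_mul, trace_dotPauli_mul] at h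
    simp only [dotProduct, ht_def, ht₀_def, ← mul_div_assoc, ← Finset.sum_div]
    linear_combination h / 2
  have hrt : r ⬝ᵥ t = r ⬝ᵥ d - (r ⬝ᵥ r) * t₀ := by
    simp only [dotProduct, ht, mul_sub, Finset.sum_sub_distrib, Finset.sum_mul, mul_assoc]
  have ht₀_eq : t₀ = -(r ⬝ᵥ d) / (1 - r ⬝ᵥ r) := by
    rw [eq_div_iff hr]
    linear_combination ht₀ - hrt
  change t j = _
  rw [ht j, ht₀_eq]
  ring

theorem qfim_single_qubit_bloch_general
    (r dra drb : Fin 3 → ℝ)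
    (hr : ∑ i, (r i) ^ 2 < 1)
    (La Lb : Matrix (Fin 2) (Fin 2) ℂ)
    (ρ : Matrix (Fin 2) (Fin 2) ℂ)
    (hρ : ρ = (1/2 : ℂ) • ((1 : Matrix (Fin 2) (Fin 2) ℂ) + ∑ i, (r i : ℂ) • pauli i))
    (hSLDa : (1/2 : ℂ) • (∑ i, (dra i : ℂ) • pauli i) = (1/2 : ℂ) • (ρ * La + La * ρ))
    (hSLDb : (1/2 : ℂ) • (∑ i, (drb i : ℂ) • pauli i) = (1/2 : ℂ) • (ρ * Lb + Lb * ρ)) :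
    (1/2 : ℂ) * (ρ * (La * Lb + Lb * La)).trace
      = ((∑ i, dra i * drb i
          + (∑ i, r i * dra i) * (∑ i, r i * drb i) / (1 - ∑ i, (r i) ^ 2) : ℝ) : ℂ) := by
  set r' : Fin 3 → ℂ := fun i => r i
  replace hρ : ρ = blochState r' := hρ
  subst hρ
  have hA : blochState r' * La + La * blochState r' = dotPauli (fun i => dra i) :=
    (smul_right_injective _ (one_div_ne_zero two_ne_zero) hSLDa).symm
  have hB : blochState r' * Lb + Lb * blochState r' = dotPauli (fun i => drb i) :=
    (smul_right_injective _ (one_div_ne_zero two_ne_zero) hSLDb).symm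
  have hr' : 1 - r' ⬝ᵥ r' ≠ 0 := by
    have : ((1 - ∑ i, r i ^ 2 : ℝ) : ℂ) ≠ 0 := by exact_mod_cast (sub_pos.2 hr).ne'
    simpa [r', dotProduct, sq] using this
  calc (1/2 : ℂ) * (blochState r' * (La * Lb + Lb * La)).trace
      = ∑ i, (dra i : ℂ) * ((pauli i * Lb).trace / 2) := by
        rw [trace_mul_anticomm, hA, trace_dotPauli_mul, Finset.mul_sum]
        exact Finset.sum_congr rfl fun i _ => by ring
    _ = _ := by
        simp only [half_trace_pauli_mul_sld hr' hB, r', dotProduct]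
        push_cast
        simp only [mul_add, Finset.sum_add_distrib, mul_div_assoc', ← mul_assoc, ← Finset.sum_mul,
          ← Finset.sum_div, sq, mul_comm (dra _ : ℂ) (r _)]

/-- For a single-qubit density matrix ρ = (I + r·σ)/2 with Bloch vector `r` (|r| < 1),
partial derivatives of the Bloch vector `dra = ∂_a r`, `drb = ∂_b r`, and Hermitian SLD
operators `La`, `Lb` satisfying ∂_a ρ = (ρ L_a + L_a ρ)/2  (where ∂_a ρ = (∂_a r·σ)/2),
the QFIM entry (1/2)Tr(ρ{L_a,L_b}) equals
(∂_a r)·(∂_b r) + (r·∂_a r)(r·∂_b r)/(1 − |r|²). -/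
theorem qfim_single_qubit_bloch
    (r dra drb : Fin 3 → ℝ)
    (hr : ∑ i, (r i) ^ 2 < 1)
    (La Lb : Matrix (Fin 2) (Fin 2) ℂ)
    (hLa : La.IsHermitian) (hLb : Lb.IsHermitian)
    (ρ : Matrix (Fin 2) (Fin 2) ℂ)
    (hρ : ρ = (1/2 : ℂ) • ((1 : Matrix (Fin 2) (Fin 2) ℂ) + ∑ i, (r i : ℂ) • pauli i))
    (hSLDa : (1/2 : ℂ) • (∑ i, (dra i : ℂ) • pauli i) = (1/2 : ℂ) • (ρ * La + La * ρ))
    (hSLDb : (1/2 : ℂ) • (∑ i, (drb i : ℂ) • pauli i) = (1/2 : ℂ) • (ρ * Lb + Lb * ρ)) :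
    (1/2 : ℂ) * (ρ * (La * Lb + Lb * La)).trace
      = ((∑ i, dra i * drb i
          + (∑ i, r i * dra i) * (∑ i, r i * drb i) / (1 - ∑ i, (r i) ^ 2) : ℝ) : ℂ) :=
  qfim_single_qubit_bloch_general r dra drb hr La Lb ρ hρ hSLDa hSLDb
end

section
/- For a single-qubit mixed state ρ (rank 2, invertible) the QFIM admits the basis-independent expression F_ab = Tr[(∂_a ρ)(∂_b ρ)] + (1/det ρ) Tr[ρ(∂_a ρ)ρ(∂_b ρ)]. -/
/-!
For a 2×2 matrix of trace one, Cayley–Hamilton reads `ρ (1 - ρ) = det ρ`, so the SLD equation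
`∂ρ = ½ (ρ L + L ρ)` has the explicit solution `L₀ = ∂ρ + (det ρ)⁻¹ (1 - ρ) ∂ρ (1 - ρ)`.
Since `Tr ((ρ L + L ρ) M) = Tr (L (ρ M + M ρ))`, the quantity
`½ Tr (ρ {L_a, L_b}) = Tr (∂_a ρ L_b)` does not depend on which solution `L_b` is used, and
evaluating it at `L₀` gives the formula: for traceless `X`, `Y` one has `X Y + Y X = Tr (X Y)`,
which turns `Tr (X (1 - ρ) Y (1 - ρ))` into `Tr (ρ X ρ Y)`.
-/

open Matrix
open scoped ComplexOrder

section TraceIdentities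

variable {n R : Type*} [Fintype n] [CommRing R]

theorem Matrix.trace_mul_anticomm_eq (ρ L M : Matrix n n R) :
    (ρ * (L * M + M * L)).trace = ((ρ * L + L * ρ) * M).trace := by
  rw [mul_add, add_mul, trace_add, trace_add, trace_mul_comm ρ (M * L), trace_mul_cycle L ρ M,
    Matrix.mul_assoc ρ L M]

theorem Matrix.trace_anticomm_mul_comm (ρ L M : Matrix n n R) :
    ((ρ * L + L * ρ) * M).trace = (L * (ρ * M + M * ρ)).trace := by
  rw [add_mul, mul_add, trace_add, trace_add, trace_mul_cycle ρ L M, trace_mul_comm L (M * ρ),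
    Matrix.mul_assoc L ρ M, add_comm]

theorem Matrix.adjugate_fin_two_eq_trace_smul_sub (A : Matrix (Fin 2) (Fin 2) R) :
    adjugate A = A.trace • 1 - A := by
  ext i j
  fin_cases i <;> fin_cases j <;> simp [adjugate_fin_two, trace_fin_two]

theorem Matrix.mul_one_sub_eq_det_smul_of_trace_eq_one {ρ : Matrix (Fin 2) (Fin 2) R}
    (h : ρ.trace = 1) : ρ * (1 - ρ) = ρ.det • 1 := by
  rw [← mul_adjugate, adjugate_fin_two_eq_trace_smul_sub, h, one_smul]

theorem Matrix.mul_add_mul_eq_trace_smul_one_of_trace_eq_zero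
    {X Y : Matrix (Fin 2) (Fin 2) R} (hX : X.trace = 0) (hY : Y.trace = 0) :
    X * Y + Y * X = (X * Y).trace • 1 := by
  rw [trace_fin_two] at hX hY
  ext i j
  fin_cases i <;> fin_cases j <;>
    simp [mul_apply, Fin.sum_univ_two, trace_fin_two]
  · linear_combination Y 0 0 * hX - X 1 1 * hY
  · linear_combination Y 0 1 * hX + X 0 1 * hY
  · linear_combination Y 1 0 * hX + X 1 0 * hY
  · linear_combination X 1 1 * hY - Y 0 0 * hX

theorem Matrix.trace_mul_one_sub_mul_one_sub_of_trace_eq_zero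
    {ρ X Y : Matrix (Fin 2) (Fin 2) R} (hρ : ρ.trace = 1) (hX : X.trace = 0)
    (hY : Y.trace = 0) :
    (X * (1 - ρ) * Y * (1 - ρ)).trace = (ρ * X * ρ * Y).trace := by
  have htr_anticomm : (ρ * (X * Y + Y * X)).trace = (X * Y).trace := by
    rw [mul_add_mul_eq_trace_smul_one_of_trace_eq_zero hX hY, Matrix.mul_smul, mul_one,
      trace_smul, hρ, smul_eq_mul, mul_one]
  have hcross : (X * ρ * Y + X * Y * ρ).trace = (ρ * (X * Y + Y * X)).trace := by
    rw [mul_add, trace_add, trace_add, trace_mul_cycle X ρ Y, trace_mul_comm ρ (X * Y),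
      trace_mul_comm ρ (Y * X), add_comm]
  calc (X * (1 - ρ) * Y * (1 - ρ)).trace
      = (X * Y - (X * ρ * Y + X * Y * ρ) + X * ρ * Y * ρ).trace := by congr 1; noncomm_ring
    _ = (ρ * X * ρ * Y).trace := by
        rw [trace_add, trace_sub, hcross, htr_anticomm, sub_self, zero_add, trace_mul_comm,
          ← Matrix.mul_assoc, ← Matrix.mul_assoc]

end TraceIdentities

theorem mul_add_mul_eq_two_smul_of_mul_one_sub_eq_algebraMap {K A : Type*} [Field K] [Ring A]
    [Algebra K A] {ρ : A} {c : K} (hc : c ≠ 0) (h : ρ * (1 - ρ) = algebraMap K A c)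
    (X : A) :
    ρ * (X + c⁻¹ • ((1 - ρ) * X * (1 - ρ))) + (X + c⁻¹ • ((1 - ρ) * X * (1 - ρ))) * ρ
      = (2 : K) • X := by
  have h_symm : (1 - ρ) * ρ = algebraMap K A c := by rw [← h]; noncomm_ring
  have hl : ρ * ((1 - ρ) * X * (1 - ρ)) = c • (X * (1 - ρ)) := by
    rw [← mul_assoc, ← mul_assoc, h, Algebra.algebraMap_eq_smul_one, smul_mul_assoc, one_mul,
      smul_mul_assoc]
  have hr : (1 - ρ) * X * (1 - ρ) * ρ = c • ((1 - ρ) * X) := by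
    rw [mul_assoc, h_symm, Algebra.algebraMap_eq_smul_one, mul_smul_comm, mul_one]
  rw [mul_add, add_mul, mul_smul_comm, smul_mul_assoc, hl, hr, smul_smul, smul_smul,
    inv_mul_cancel₀ hc, one_smul, one_smul, two_smul]
  noncomm_ring

theorem qfim_single_qubit_basis_independent_general
    (ρ dρa dρb La Lb : Matrix (Fin 2) (Fin 2) ℂ)
    (hρ : ρ.PosDef) (htr : ρ.trace = 1)
    (hdtra : dρa.trace = 0) (hdtrb : dρb.trace = 0)
    (hSLDa : dρa = (1/2 : ℂ) • (ρ * La + La * ρ))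
    (hSLDb : dρb = (1/2 : ℂ) • (ρ * Lb + Lb * ρ)) :
    (1/2 : ℂ) * (ρ * (La * Lb + Lb * La)).trace
      = (dρa * dρb).trace + (ρ.det)⁻¹ * (ρ * dρa * ρ * dρb).trace := by
  set L₀ := dρb + (ρ.det)⁻¹ • ((1 - ρ) * dρb * (1 - ρ)) with hL₀
  have hSLD₀ : dρb = (1/2 : ℂ) • (ρ * L₀ + L₀ * ρ) := by
    rw [mul_add_mul_eq_two_smul_of_mul_one_sub_eq_algebraMap hρ.det_pos.ne'
      (by rw [Algebra.algebraMap_eq_smul_one]; exact mul_one_sub_eq_det_smul_of_trace_eq_one htr),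
      smul_smul]
    norm_num
  calc (1/2 : ℂ) * (ρ * (La * Lb + Lb * La)).trace
      = (La * dρb).trace := by
        rw [trace_mul_anticomm_eq, trace_anticomm_mul_comm, hSLDb, Matrix.mul_smul, trace_smul,
          smul_eq_mul]
    _ = (dρa * L₀).trace := by
        rw [hSLD₀, hSLDa, Matrix.mul_smul, Matrix.smul_mul, trace_smul, trace_smul,
          trace_anticomm_mul_comm]
    _ = (dρa * dρb).trace + (ρ.det)⁻¹ * (dρa * (1 - ρ) * dρb * (1 - ρ)).trace := by
        rw [hL₀, mul_add, trace_add, Matrix.mul_smul, trace_smul, smul_eq_mul, Matrix.mul_assoc,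
          Matrix.mul_assoc, Matrix.mul_assoc]
    _ = (dρa * dρb).trace + (ρ.det)⁻¹ * (ρ * dρa * ρ * dρb).trace := by
        rw [trace_mul_one_sub_mul_one_sub_of_trace_eq_zero htr hdtra hdtrb]

/-- Basis-independent expression of the QFIM for a single-qubit (2×2, full-rank) mixed
state: with Hermitian traceless derivatives ∂_a ρ, ∂_b ρ and Hermitian SLDs L_a, L_b,
(1/2)Tr(ρ{L_a,L_b}) = Tr[(∂_a ρ)(∂_b ρ)] + (1/det ρ) Tr[ρ(∂_a ρ)ρ(∂_b ρ)]. -/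
theorem qfim_single_qubit_basis_independent
    (ρ dρa dρb La Lb : Matrix (Fin 2) (Fin 2) ℂ)
    (hρ : ρ.PosDef) (htr : ρ.trace = 1)
    (hda : dρa.IsHermitian) (hdb : dρb.IsHermitian)
    (hdtra : dρa.trace = 0) (hdtrb : dρb.trace = 0)
    (hLa : La.IsHermitian) (hLb : Lb.IsHermitian)
    (hSLDa : dρa = (1/2 : ℂ) • (ρ * La + La * ρ))
    (hSLDb : dρb = (1/2 : ℂ) • (ρ * Lb + Lb * ρ)) :
    (1/2 : ℂ) * (ρ * (La * Lb + Lb * La)).trace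
      = (dρa * dρb).trace + (ρ.det)⁻¹ * (ρ * dρa * ρ * dρb).trace :=
  qfim_single_qubit_basis_independent_general ρ dρa dρb La Lb hρ htr hdtra hdtrb hSLDa hSLDb
end

section
/- For 2×2 density matrices it holds that Tr[(∂_a ρ)(∂_b ρ)] = Tr(ρ{∂_a ρ, ∂_b ρ}), where ∂_a ρ, ∂_b ρ are derivatives of a smooth family of 2×2 density matrices. -/
open Matrix
open scoped ComplexOrder

theorem Matrix.mul_add_mul_eq_trace_mul_smul_one_of_trace_eq_zero {R : Type*} [CommRing R]
    {A B : Matrix (Fin 2) (Fin 2) R} (hA : A.trace = 0) (hB : B.trace = 0) :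
    A * B + B * A = (A * B).trace • (1 : Matrix (Fin 2) (Fin 2) R) := by
  rw [trace_fin_two] at hA hB
  have hA₁₁ : A 1 1 = -A 0 0 := by linear_combination hA
  have hB₁₁ : B 1 1 = -B 0 0 := by linear_combination hB
  ext i j
  fin_cases i <;> fin_cases j <;>
    simp [trace_fin_two, mul_apply, Fin.sum_univ_two, hA₁₁, hB₁₁] <;> ring

theorem trace_drho_identity_qubit_general
    (ρ A B : Matrix (Fin 2) (Fin 2) ℂ)
    (htr : ρ.trace = 1)
    (hAtr : A.trace = 0) (hBtr : B.trace = 0) :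
    (A * B).trace = (ρ * (A * B + B * A)).trace := by
  rw [mul_add_mul_eq_trace_mul_smul_one_of_trace_eq_zero hAtr hBtr, Matrix.mul_smul, mul_one,
    trace_smul, htr, smul_eq_mul, mul_one]

/-- For 2×2 density matrices, Tr[(∂_a ρ)(∂_b ρ)] = Tr(ρ{∂_a ρ, ∂_b ρ}), where the
derivatives of the family are Hermitian traceless matrices A = ∂_a ρ, B = ∂_b ρ. -/
theorem trace_drho_identity_qubit
    (ρ A B : Matrix (Fin 2) (Fin 2) ℂ)
    (hρ : ρ.PosSemidef) (htr : ρ.trace = 1)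
    (hA : A.IsHermitian) (hB : B.IsHermitian)
    (hAtr : A.trace = 0) (hBtr : B.trace = 0) :
    (A * B).trace = (ρ * (A * B + B * A)).trace :=
  trace_drho_identity_qubit_general ρ A B htr hAtr hBtr
end
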